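/- There exists a simple graph G and a vertex P ∈ V(G) such that the rank Weierstrass set H_r(P) = {0, 3, 5, 7} ∪ { n ∈ ℕ : n ≥ 8 }; in particular, H_r(P) is not closed under addition (3 ∈ H_r(P) but 3 + 3 = 6 ∉ H_r(P)), so rank Weierstrass sets of graphs need not be semigroups. Concretely, one may take G to be the vertex gluing of K_{2,3} and two copies of K_{2,2} at a common vertex P, where in K_{2,3} the glued vertex has degree 3 and in each K_{2,2} the glued vertex has degree 2. -/

import Mathlib

open scoped Classical

/-- A graph: a finite connected multigraph with no loop edges, given by a symmetric
edge-multiplicity function on a finite nonempty vertex type. -/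
structure Multigraph where
  V : Type
  [fintypeV : Fintype V]
  [decEqV : DecidableEq V]
  [nonemptyV : Nonempty V]
  adj : V → V → ℕ
  adj_symm : ∀ u v, adj u v = adj v u
  adj_loopless : ∀ v, adj v v = 0
  conn : ∀ u v, Relation.ReflTransGen (fun a b => adj a b ≠ 0) u v

attribute [instance] Multigraph.fintypeV Multigraph.decEqV Multigraph.nonemptyV

namespace Multigraph

variable (G : Multigraph)

/-- A simple graph: no multiple edges and more than one vertex. -/
def Simple : Prop :=
  (∀ u v, G.adj u v ≤ 1) ∧ 1 < Fintype.card G.V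

/-- The degree of a divisor. -/
def deg (D : G.V → ℤ) : ℤ := ∑ v, D v

/-- A divisor is effective if all its coefficients are nonnegative. -/
def Effective (D : G.V → ℤ) : Prop := ∀ v, 0 ≤ D v

/-- The Laplacian of an integer-valued function on the vertices. -/
def lap (f : G.V → ℤ) : G.V → ℤ := fun v => ∑ w, (G.adj v w : ℤ) * (f v - f w)

/-- The linear system `|D|` is nonempty, i.e. `D` is linearly equivalent to an
effective divisor. -/
def LinNonempty (D : G.V → ℤ) : Prop :=
  ∃ f : G.V → ℤ, G.Effective (D - G.lap f)

/-- The Baker–Norine rank of a divisor: `-1` if `|D| = ∅`, otherwise the maximal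
`k` such that `|D - E| ≠ ∅` for every effective divisor `E` of degree `k`. -/
noncomputable def rank (D : G.V → ℤ) : ℤ :=
  if G.LinNonempty D then
    ((sSup {k : ℕ | ∀ E : G.V → ℤ, G.Effective E → G.deg E = (k : ℤ) →
        G.LinNonempty (D - E)} : ℕ) : ℤ)
  else -1

/-- The divisor `n • P`. -/
def pt (P : G.V) (n : ℤ) : G.V → ℤ := fun v => if v = P then n else 0

/-- The rank Weierstrass set of `G` at `P`. -/
def Hr (P : G.V) : Set ℕ :=
  {n : ℕ | G.rank (G.pt P ((n : ℤ) - 1)) < G.rank (G.pt P (n : ℤ))}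

/-- The functional Weierstrass set of `G` at `P`: pole orders at `P` of functions
with a unique pole at `P`. -/
def Hf (P : G.V) : Set ℕ :=
  {n : ℕ | ∃ f : G.V → ℤ, G.lap f P = -(n : ℤ) ∧ ∀ Q, Q ≠ P → 0 ≤ G.lap f Q}

/-- The number of edges joining `Q` to vertices outside `A`. -/
def outdeg (A : Finset G.V) (Q : G.V) : ℕ := ∑ R ∈ Aᶜ, G.adj Q R

/-- A divisor is `P`-reduced. -/
def Reduced (P : G.V) (D : G.V → ℤ) : Prop :=
  (∀ Q, Q ≠ P → 0 ≤ D Q) ∧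
  ∀ A : Finset G.V, A.Nonempty → P ∉ A → ∃ Q ∈ A, D Q < (G.outdeg A Q : ℤ)

/-- `G` is the graph `B_n` with two vertices joined by `n` parallel edges. -/
def IsBanana (n : ℕ) : Prop :=
  Fintype.card G.V = 2 ∧ ∀ u v, u ≠ v → G.adj u v = n

/-- `G` is the complete graph on `n` vertices. -/
def IsComplete (n : ℕ) : Prop :=
  Fintype.card G.V = n ∧ ∀ u v, u ≠ v → G.adj u v = 1

/-- `G` is the complete bipartite graph with parts `A` (of size `m`) and its
complement (of size `n`). -/
def IsCompleteBipartite (A : Finset G.V) (m n : ℕ) : Prop :=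
  A.card = m ∧ Aᶜ.card = n ∧
  ∀ u v, G.adj u v = if (u ∈ A ∧ v ∉ A) ∨ (u ∉ A ∧ v ∈ A) then 1 else 0

/-- `λ_Q(k)`: the least `n` with `r(nQ) = k`. -/
noncomputable def lam (Q : G.V) (k : ℕ) : ℕ :=
  sInf {n : ℕ | G.rank (G.pt Q (n : ℤ)) = (k : ℤ)}

end Multigraph

/-- `G` is the vertex gluing of `G₁` and `G₂` identifying `P₁` and `P₂` into `P`. -/
def IsVertexGluing (G G₁ G₂ : Multigraph) (P : G.V) (P₁ : G₁.V) (P₂ : G₂.V) : Prop :=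
  ∃ (ι₁ : G₁.V → G.V) (ι₂ : G₂.V → G.V),
    Function.Injective ι₁ ∧ Function.Injective ι₂ ∧
    ι₁ P₁ = P ∧ ι₂ P₂ = P ∧
    (∀ a b, ι₁ a = ι₂ b → ι₁ a = P) ∧
    (∀ v : G.V, (∃ a, ι₁ a = v) ∨ (∃ b, ι₂ b = v)) ∧
    (∀ a b, G.adj (ι₁ a) (ι₁ b) = G₁.adj a b) ∧
    (∀ a b, G.adj (ι₂ a) (ι₂ b) = G₂.adj a b) ∧
    (∀ a b, ι₁ a ≠ P → ι₂ b ≠ P → G.adj (ι₁ a) (ι₂ b) = 0)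

/-!
The glued graph has genus `g = 14 - 11 + 1 = 4`, and `P` is the cut vertex joining its three
blocks. If `v` is the vertex opposite `P` in the `K_{2,3}` and `w` one opposite `P` in a `K_{2,2}`,
then `3P ~ 3v` and `2P ~ 2w`; combining these equivalences gives `r(3P) ≥ 1` and `r(5P) ≥ 2`,
while the easy half of Riemann–Roch (every divisor of degree `≥ g` is equivalent to an effective
one, proved through `P`-reduced divisors) gives `r(nP) ≥ n - 4`. Conversely, `2jP` minus the
opposite vertices of `j` blocks is equivalent to a `P`-reduced divisor that is negative at `P`,
hence to no effective divisor. So `r(nP) = ⌊(n - 1)/2⌋` for `1 ≤ n ≤ 7` and `n - 4` from then on,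
which jumps exactly at `0, 3, 5, 7` and at every `n ≥ 8`.
-/

namespace Multigraph

open Finset

variable (G : Multigraph)

section Laplacian

lemma lap_add (f g : G.V → ℤ) : G.lap (f + g) = G.lap f + G.lap g := by
  ext v
  simp only [lap, Pi.add_apply, ← sum_add_distrib]
  exact sum_congr rfl fun w _ => by ring

def lapHom : (G.V → ℤ) →+ (G.V → ℤ) := AddMonoidHom.mk' G.lap G.lap_add

lemma lapHom_apply (f : G.V → ℤ) : G.lapHom f = G.lap f := rfl

lemma lap_sub (f g : G.V → ℤ) : G.lap (f - g) = G.lap f - G.lap g :=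
  map_sub G.lapHom f g

lemma sum_lap (f : G.V → ℤ) : ∑ v, G.lap f v = 0 := by
  have h : ∑ v, ∑ w, (G.adj v w : ℤ) * f w = ∑ v, ∑ w, (G.adj v w : ℤ) * f v := by
    rw [sum_comm]
    exact sum_congr rfl fun v _ => sum_congr rfl fun w _ => by rw [G.adj_symm]
  simp only [lap, mul_sub, sum_sub_distrib, h, sub_self]

lemma sum_mul_lap_comm (f g : G.V → ℤ) :
    ∑ v, f v * G.lap g v = ∑ v, g v * G.lap f v := by
  have expand : ∀ f g : G.V → ℤ, ∑ v, f v * G.lap g v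
      = ∑ v, ∑ w, (G.adj v w : ℤ) * (f v * g v) - ∑ v, ∑ w, (G.adj v w : ℤ) * (f v * g w) := by
    intro f g
    simp only [lap, mul_sum, ← sum_sub_distrib]
    exact sum_congr rfl fun v _ => sum_congr rfl fun w _ => by ring
  have cross : ∑ v, ∑ w, (G.adj v w : ℤ) * (f v * g w)
      = ∑ v, ∑ w, (G.adj v w : ℤ) * (g v * f w) := by
    rw [sum_comm]
    exact sum_congr rfl fun v _ => sum_congr rfl fun w _ => by rw [G.adj_symm]; ring
  rw [expand, expand, cross]
  simp only [mul_comm (f _) (g _)]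

end Laplacian

section Divisors

variable {G}

lemma deg_add (D E : G.V → ℤ) : G.deg (D + E) = G.deg D + G.deg E := sum_add_distrib

lemma deg_sub (D E : G.V → ℤ) : G.deg (D - E) = G.deg D - G.deg E := sum_sub_distrib ..

lemma deg_pt (P : G.V) (n : ℤ) : G.deg (G.pt P n) = n := by
  simp [deg, pt]

lemma deg_sub_lap (D f : G.V → ℤ) : G.deg (D - G.lap f) = G.deg D := by
  rw [deg_sub, sub_eq_self]
  exact G.sum_lap f

lemma effective_pt (P : G.V) {n : ℤ} (hn : 0 ≤ n) : G.Effective (G.pt P n) := by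
  intro v
  unfold pt
  split_ifs <;> simp [hn]

lemma pt_mono (P : G.V) {m n : ℤ} (h : m ≤ n) : G.pt P m ≤ G.pt P n := by
  intro v
  unfold pt
  split_ifs <;> simp [h]

lemma Effective.add {D E : G.V → ℤ} (hD : G.Effective D) (hE : G.Effective E) :
    G.Effective (D + E) :=
  fun v => add_nonneg (hD v) (hE v)

lemma Effective.eq_zero_of_deg_eq_zero {E : G.V → ℤ} (hE : G.Effective E) (h : G.deg E = 0) :
    E = 0 :=
  funext fun v => (sum_eq_zero_iff_of_nonneg fun w _ => hE w).1 h v (mem_univ v)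

lemma Effective.exists_eq_add_pt {E : G.V → ℤ} (hE : G.Effective E) {k : ℕ}
    (h : G.deg E = k + 1) :
    ∃ v E', G.Effective E' ∧ G.deg E' = k ∧ E = E' + G.pt v 1 := by
  obtain ⟨v, hv⟩ : ∃ v, 0 < E v := by
    by_contra! hc
    rw [(show E = 0 from funext fun v => le_antisymm (hc v) (hE v))] at h
    simp [deg] at h
    omega
  refine ⟨v, E - G.pt v 1, fun w => ?_, by rw [deg_sub, deg_pt, h]; ring, by simp⟩
  have := hE w
  simp only [Pi.sub_apply, pt]
  split_ifs with hw <;> [subst hw; skip] <;> omega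

lemma Effective.linNonempty {D : G.V → ℤ} (h : G.Effective D) : G.LinNonempty D :=
  ⟨0, by simpa [← lapHom_apply] using h⟩

lemma LinNonempty.mono {D D' : G.V → ℤ} (h : G.LinNonempty D) (hle : D ≤ D') :
    G.LinNonempty D' := by
  obtain ⟨f, hf⟩ := h
  exact ⟨f, fun v => (hf v).trans (sub_le_sub_right (hle v) _)⟩

lemma LinNonempty.sub_lap {D : G.V → ℤ} (h : G.LinNonempty D) (g : G.V → ℤ) :
    G.LinNonempty (D - G.lap g) := by
  obtain ⟨f, hf⟩ := h
  exact ⟨f - g, by rwa [lap_sub, sub_sub_sub_cancel_right]⟩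

lemma not_linNonempty_of_deg_neg {D : G.V → ℤ} (h : G.deg D < 0) : ¬ G.LinNonempty D := by
  rintro ⟨f, hf⟩
  have := sum_nonneg fun v (_ : v ∈ univ) => hf v
  rw [← deg, deg_sub_lap] at this
  omega

end Divisors

def RankGe (D : G.V → ℤ) (k : ℕ) : Prop :=
  ∀ E : G.V → ℤ, G.Effective E → G.deg E = k → G.LinNonempty (D - E)

section Rank

variable {G}

lemma RankGe.mono {D D' : G.V → ℤ} {k : ℕ} (h : G.RankGe D k) (hle : D ≤ D') :
    G.RankGe D' k :=
  fun E hE hd => (h E hE hd).mono (sub_le_sub_right hle E)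

lemma rankGe_zero {D : G.V → ℤ} (h : G.LinNonempty D) : G.RankGe D 0 := by
  intro E hE hd
  rwa [hE.eq_zero_of_deg_eq_zero (by exact_mod_cast hd), sub_zero]

lemma rankGe_succ {D : G.V → ℤ} {k : ℕ} (h : ∀ v, G.RankGe (D - G.pt v 1) k) :
    G.RankGe D (k + 1) := by
  intro E hE hd
  obtain ⟨v, E', hE', hd', rfl⟩ := hE.exists_eq_add_pt (by exact_mod_cast hd)
  rw [add_comm, ← sub_sub]
  exact h v E' hE' hd'

lemma RankGe.anti {D : G.V → ℤ} {k m : ℕ} (h : G.RankGe D m) (hkm : k ≤ m) :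
    G.RankGe D k := by
  intro E hE hd
  obtain ⟨v⟩ := G.nonemptyV
  have hm : G.deg (E + G.pt v (m - k : ℕ)) = m := by
    rw [deg_add, deg_pt, hd]; push_cast [hkm]; ring
  refine (h _ (hE.add (effective_pt v (by positivity))) hm).mono fun w => ?_
  have := effective_pt v (Nat.cast_nonneg (m - k)) w
  simp only [Pi.sub_apply, Pi.add_apply]
  linarith

lemma RankGe.linNonempty {D : G.V → ℤ} {k : ℕ} (h : G.RankGe D k) : G.LinNonempty D :=
  (h.anti k.zero_le 0 (fun _ => le_rfl) (by simp [deg])).mono (by simp)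

lemma rank_eq_of_rankGe {D : G.V → ℤ} {k : ℕ} (h : G.RankGe D k) (h' : ¬ G.RankGe D (k + 1)) :
    G.rank D = k := by
  have hmax : ∀ m, G.RankGe D m → m ≤ k := fun m hm => by
    by_contra! hlt
    exact h' (hm.anti hlt)
  rw [rank, if_pos h.linNonempty]
  exact_mod_cast le_antisymm (csSup_le ⟨k, h⟩ hmax) (le_csSup ⟨k, hmax⟩ h)

lemma not_rankGe_pt {P : G.V} {F : G.V → ℤ} {m n k d : ℕ} (hF : G.Effective F)
    (hd : G.deg F = d) (h : ¬ G.LinNonempty (G.pt P m - F)) (hmn : m ≤ n) (hk : m + k = n + d) :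
    ¬ G.RankGe (G.pt P n) k := by
  intro hr
  have hE : G.deg (G.pt P (n - m : ℕ) + F) = k := by
    rw [deg_add, deg_pt, hd]; push_cast [hmn]; omega
  refine h ((hr _ ((effective_pt P (Nat.cast_nonneg _)).add hF) hE).mono fun v => ?_)
  simp only [pt, Pi.sub_apply, Pi.add_apply]
  split_ifs <;> push_cast [hmn] <;> linarith

lemma rank_eq_neg_one_of_deg_neg {D : G.V → ℤ} (h : G.deg D < 0) : G.rank D = -1 :=
  if_neg (not_linNonempty_of_deg_neg h)

end Rank

section Reduced

variable {G}

lemma natCast_outdeg (A : Finset G.V) (Q : G.V) :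
    (G.outdeg A Q : ℤ) = ∑ R ∈ Aᶜ, (G.adj Q R : ℤ) := by
  simp [outdeg]

lemma outdeg_le_lap {f : G.V → ℤ} {A : Finset G.V} {Q : G.V} (hmax : ∀ v, f v ≤ f Q)
    (hout : ∀ R ∉ A, f R < f Q) : (G.outdeg A Q : ℤ) ≤ G.lap f Q := by
  rw [natCast_outdeg, lap, ← sum_add_sum_compl A]
  refine le_add_of_nonneg_of_le (sum_nonneg fun R _ => ?_) (sum_le_sum fun R hR => ?_)
  · exact mul_nonneg (Nat.cast_nonneg _) (sub_nonneg.2 (hmax R))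
  · have := hout R (mem_compl.1 hR)
    exact le_mul_of_one_le_right (Nat.cast_nonneg _) (by omega)

/-- Dhar's criterion, easy direction: on the set `A` where `f` is maximal, `D - Δf` would be
negative at `P` if `P ∈ A`, and otherwise at the vertex of `A` that reducedness provides. -/
lemma Reduced.not_linNonempty {P : G.V} {D : G.V → ℤ} (hD : G.Reduced P D) (hP : D P < 0) :
    ¬ G.LinNonempty D := by
  rintro ⟨f, hf⟩
  obtain ⟨v₀, -, hv₀⟩ := exists_max_image univ f univ_nonempty
  set A := univ.filter fun v => f v = f v₀
  have hA : ∀ Q ∈ A, (G.outdeg A Q : ℤ) ≤ G.lap f Q := fun Q hQ => by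
    have hQ : f Q = f v₀ := (mem_filter.1 hQ).2
    refine outdeg_le_lap (fun v => hQ ▸ hv₀ v (mem_univ v)) fun R hR => ?_
    have := hv₀ R (mem_univ R)
    have : f R ≠ f v₀ := fun h => hR (by simp [A, h])
    omega
  by_cases hPA : P ∈ A
  · have := hf P
    have := hA P hPA
    simp only [Pi.sub_apply] at *
    omega
  · obtain ⟨Q, hQA, hQ⟩ := hD.2 A ⟨v₀, by simp [A]⟩ hPA
    have := hf Q
    have := hA Q hQA
    simp only [Pi.sub_apply] at *
    omega

lemma not_linNonempty_of_reduced {P : G.V} {D f : G.V → ℤ} (hD : G.Reduced P (D - G.lap f))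
    (hP : D P - G.lap f P < 0) : ¬ G.LinNonempty D :=
  fun h => hD.not_linNonempty hP (h.sub_lap f)

lemma Reduced.of_order {P : G.V} {D : G.V → ℤ} (ord : G.V → ℕ) (h0 : ∀ Q, Q ≠ P → 0 ≤ D Q)
    (hlt : ∀ Q, Q ≠ P → D Q < ∑ R ∈ univ.filter (fun R => ord R < ord Q), (G.adj Q R : ℤ)) :
    G.Reduced P D := by
  refine ⟨h0, fun A hA hPA => ?_⟩
  obtain ⟨Q, hQA, hQmin⟩ := A.exists_min_image ord hA
  have hQP : Q ≠ P := fun h => hPA (h ▸ hQA)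
  refine ⟨Q, hQA, (hlt Q hQP).trans_le ?_⟩
  rw [natCast_outdeg]
  refine sum_le_sum_of_subset_of_nonneg (fun R hR => ?_) fun _ _ _ => Nat.cast_nonneg _
  simp only [mem_filter, mem_univ, true_and] at hR
  exact mem_compl.2 fun hRA => (hQmin R hRA).not_gt hR

lemma Reduced.two_mul_sum_le {P : G.V} {D : G.V → ℤ} (hD : G.Reduced P D) (A : Finset G.V)
    (hPA : P ∉ A) :
    2 * ∑ Q ∈ A, D Q + 2 * #A + ∑ Q ∈ A, ∑ R ∈ A, (G.adj Q R : ℤ)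
      ≤ 2 * ∑ Q ∈ A, ∑ R, (G.adj Q R : ℤ) := by
  induction A using Finset.strongInduction with
  | H A ih =>
  rcases A.eq_empty_or_nonempty with rfl | hA
  · simp
  obtain ⟨Q, hQA, hQ⟩ := hD.2 A hA hPA
  have IH := ih (A.erase Q) (erase_ssubset hQA) fun h => hPA (mem_of_mem_erase h)
  have split : ∀ g : G.V → ℤ, ∑ x ∈ A, g x = ∑ x ∈ A.erase Q, g x + g Q :=
    fun g => (sum_erase_add A g hQA).symm
  have inner : ∑ x ∈ A, ∑ y ∈ A, (G.adj x y : ℤ)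
      = ∑ x ∈ A.erase Q, ∑ y ∈ A.erase Q, (G.adj x y : ℤ)
        + 2 * ∑ y ∈ A.erase Q, (G.adj Q y : ℤ) := by
    have symm : ∑ x ∈ A.erase Q, (G.adj x Q : ℤ) = ∑ x ∈ A.erase Q, (G.adj Q x : ℤ) :=
      sum_congr rfl fun x _ => by rw [G.adj_symm]
    rw [split fun x => ∑ y ∈ A, (G.adj x y : ℤ),
      sum_congr rfl fun x _ => split (G.adj x · : G.V → ℤ), split (G.adj Q · : G.V → ℤ), sum_add_distrib, symm, G.adj_loopless, Nat.cast_zero, add_zero]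
    ring
  have row : ∑ R, (G.adj Q R : ℤ) = ∑ y ∈ A.erase Q, (G.adj Q y : ℤ) + G.outdeg A Q := by
    rw [natCast_outdeg, ← sum_add_sum_compl A, split fun y => (G.adj Q y : ℤ),
      G.adj_loopless, Nat.cast_zero, add_zero]
  have hcard : (#A : ℤ) = #(A.erase Q) + 1 := by
    rw [card_erase_of_mem hQA, Nat.cast_sub (card_pos.2 hA)]
    ring
  rw [split D, hcard, inner, split fun x => ∑ R, (G.adj x R : ℤ), row]
  linarith

/-- The right-hand side is `2g`, for `g = |E| - |V| + 1` the genus. -/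
lemma Reduced.two_mul_sum_erase_le {P : G.V} {D : G.V → ℤ} (hD : G.Reduced P D) :
    2 * ∑ Q ∈ univ.erase P, D Q ≤ ∑ u, ∑ v, (G.adj u v : ℤ) - 2 * Fintype.card G.V + 2 := by
  have h := hD.two_mul_sum_le (univ.erase P) (notMem_erase P univ)
  have row : ∀ u, ∑ v ∈ univ.erase P, (G.adj u v : ℤ) = ∑ v, (G.adj u v : ℤ) - G.adj u P :=
    fun u => sum_erase_eq_sub (mem_univ P)
  have col : ∑ u, (G.adj u P : ℤ) = ∑ v, (G.adj P v : ℤ) :=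
    sum_congr rfl fun u _ => by rw [G.adj_symm]
  rw [sum_congr rfl fun u _ => row u, sum_sub_distrib, sum_erase_eq_sub (mem_univ P),
    sum_erase_eq_sub (mem_univ P), sum_erase_eq_sub (mem_univ P), col,
    card_erase_of_mem (mem_univ P), card_univ, Nat.cast_sub Fintype.card_pos, G.adj_loopless] at h
  push_cast at h
  rw [sum_erase_eq_sub (mem_univ P)]
  linarith

end Reduced

/-- Such `g` exist on every graph (`k` the number of spanning trees, by the matrix-tree
theorem); on the graph below they are given explicitly. -/
def IsPotential (P Q : G.V) (k : ℤ) (g : G.V → ℤ) : Prop :=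
  0 < k ∧ g P = 0 ∧ (∀ v, 0 ≤ g v) ∧ G.lap g = G.pt Q k - G.pt P k

/-- Potentials bound the admissible functions from above, and a maximal one makes `D - Δf`
`P`-reduced. -/
def Admissible (P : G.V) (D f : G.V → ℤ) : Prop :=
  f P = 0 ∧ ∀ Q, Q ≠ P → G.lap f Q ≤ D Q

section ReducedExistence

variable {G} {P : G.V} {D : G.V → ℤ}

lemma lap_sup_le_left {f g : G.V → ℤ} {Q : G.V} (h : g Q ≤ f Q) :
    G.lap (f ⊔ g) Q ≤ G.lap f Q := by
  refine sum_le_sum fun w _ => mul_le_mul_of_nonneg_left ?_ (Nat.cast_nonneg _)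
  simp only [Pi.sup_apply, sup_of_le_left h]
  linarith [le_sup_left (a := f w) (b := g w)]

lemma Admissible.sup {f g : G.V → ℤ} (hf : G.Admissible P D f) (hg : G.Admissible P D g) :
    G.Admissible P D (f ⊔ g) := by
  refine ⟨by simp [hf.1, hg.1], fun Q hQ => ?_⟩
  rcases le_total (g Q) (f Q) with h | h
  · exact (lap_sup_le_left h).trans (hf.2 Q hQ)
  · rw [sup_comm]
    exact (lap_sup_le_left h).trans (hg.2 Q hQ)

lemma exists_admissible (hpot : ∀ Q, ∃ k g, G.IsPotential P Q k g) (D : G.V → ℤ) :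
    ∃ f, G.Admissible P D f := by
  choose k g hpot using hpot
  refine ⟨-∑ i, |D i| • g i, by simp [(hpot _).2.1], fun Q hQ => ?_⟩
  have hlap : G.lap (-∑ i, |D i| • g i) Q = -(|D Q| * k Q) := by
    simp only [← lapHom_apply, map_neg, map_sum, map_zsmul]
    simp [lapHom_apply, (hpot _).2.2.2, pt, hQ]
  rw [hlap]
  have := (hpot Q).1
  nlinarith [abs_nonneg (D Q), neg_abs_le (D Q)]

lemma Admissible.mul_apply_le {f g : G.V → ℤ} {Q : G.V} {k : ℤ} (hf : G.Admissible P D f)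
    (hg : G.IsPotential P Q k g) : k * f Q ≤ ∑ v, g v * D v := by
  calc k * f Q = ∑ v, f v * G.lap g v := by simp [hg.2.2.2, pt, mul_sub, hf.1, mul_comm]
    _ = ∑ v, g v * G.lap f v := G.sum_mul_lap_comm f g
    _ ≤ ∑ v, g v * D v := sum_le_sum fun v _ => by
      rcases eq_or_ne v P with rfl | hv
      · simp [hg.2.1]
      · exact mul_le_mul_of_nonneg_left (hf.2 v hv) (hg.2.2.1 v)

lemma exists_max_admissible (hpot : ∀ Q, ∃ k g, G.IsPotential P Q k g) (D : G.V → ℤ) :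
    ∃ F, G.Admissible P D F ∧ ∀ f, G.Admissible P D f → f ≤ F := by
  have hbest : ∀ Q, ∃ fQ, G.Admissible P D fQ ∧ ∀ f, G.Admissible P D f → f Q ≤ fQ Q := by
    intro Q
    obtain ⟨k, g, hg⟩ := hpot Q
    have hbdd : ∀ f, G.Admissible P D f → f Q ≤ max 0 (∑ v, g v * D v) := fun f hf => by
      have := hf.mul_apply_le hg
      have := hg.1
      rcases le_or_gt (f Q) 0 with h | h
      · exact h.trans (le_max_left _ _)
      · exact le_max_of_le_right (by nlinarith)
    obtain ⟨f₀, hf₀⟩ := exists_admissible hpot D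
    obtain ⟨_, ⟨fQ, hfQ, rfl⟩, hmax⟩ := Int.exists_greatest_of_bdd
      (P := fun z => ∃ f, G.Admissible P D f ∧ f Q = z)
      ⟨_, fun z ⟨f, hf, hz⟩ => hz ▸ hbdd f hf⟩ ⟨_, f₀, hf₀, rfl⟩
    exact ⟨fQ, hfQ, fun f hf => hmax _ ⟨f, hf, rfl⟩⟩
  choose fam hfam hfammax using hbest
  refine ⟨univ.sup' univ_nonempty fam,
    sup'_induction _ _ (fun _ ha _ hb => ha.sup hb) fun Q _ => hfam Q, fun f hf v => ?_⟩
  exact (hfammax v f hf).trans (le_sup' fam (mem_univ v) v)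

lemma lap_indicator_of_mem {A : Finset G.V} {Q : G.V} (hQ : Q ∈ A) :
    G.lap (fun v => if v ∈ A then 1 else 0) Q = G.outdeg A Q := by
  rw [natCast_outdeg, lap, ← sum_add_sum_compl A, sum_eq_zero fun x hx => by simp [hx, hQ],
    zero_add]
  exact sum_congr rfl fun x hx => by simp [hQ, mem_compl.1 hx]

lemma lap_indicator_nonpos_of_notMem {A : Finset G.V} {Q : G.V} (hQ : Q ∉ A) :
    G.lap (fun v => if v ∈ A then 1 else 0) Q ≤ 0 := by
  refine sum_nonpos fun w _ => ?_
  simp only [hQ, if_false]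
  split_ifs <;> simp

/-- If some `A ∌ P` violated reducedness, raising `F` by one on `A` would stay admissible. -/
lemma Admissible.reduced_of_max {F : G.V → ℤ} (hF : G.Admissible P D F)
    (hmax : ∀ f, G.Admissible P D f → f ≤ F) : G.Reduced P (D - G.lap F) := by
  refine ⟨fun Q hQ => sub_nonneg.2 (hF.2 Q hQ), fun A ⟨q, hq⟩ hPA => ?_⟩
  by_contra! hcon
  have hraise : G.Admissible P D (F + fun v => if v ∈ A then 1 else 0) := by
    refine ⟨by simp [hF.1, hPA], fun Q hQ => ?_⟩
    rw [lap_add, Pi.add_apply]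
    by_cases hQA : Q ∈ A
    · have := hcon Q hQA
      rw [lap_indicator_of_mem hQA]
      simp only [Pi.sub_apply] at this
      linarith
    · linarith [lap_indicator_nonpos_of_notMem (G := G) hQA, hF.2 Q hQ]
  have := hmax _ hraise q
  simp [hq] at this

lemma exists_reduced (hpot : ∀ Q, ∃ k g, G.IsPotential P Q k g) (D : G.V → ℤ) :
    ∃ f, G.Reduced P (D - G.lap f) :=
  let ⟨F, hF, hmax⟩ := exists_max_admissible hpot D
  ⟨F, hF.reduced_of_max hmax⟩

theorem linNonempty_of_genus_le_deg (hpot : ∀ Q, ∃ k g, G.IsPotential P Q k g)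
    (hD : ∑ u, ∑ v, (G.adj u v : ℤ) - 2 * Fintype.card G.V + 2 ≤ 2 * G.deg D) :
    G.LinNonempty D := by
  obtain ⟨f, hf⟩ := exists_reduced hpot D
  have hsum := hf.two_mul_sum_erase_le
  have hsplit := add_sum_erase univ (D - G.lap f) (mem_univ P)
  rw [← deg, deg_sub_lap] at hsplit
  refine ⟨f, fun v => ?_⟩
  rcases eq_or_ne v P with rfl | hv
  · linarith
  · exact hf.1 v hv

end ReducedExistence

lemma reflTransGen_of_hub {V : Type} (adj : V → V → ℕ) (hsymm : ∀ u v, adj u v = adj v u)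
    (hub : V) (h : ∀ v, v = hub ∨ adj v hub ≠ 0 ∨ ∃ w, adj v w ≠ 0 ∧ adj w hub ≠ 0)
    (u v : V) : Relation.ReflTransGen (fun a b => adj a b ≠ 0) u v := by
  have toHub : Relation.ReflTransGen (fun a b => adj a b ≠ 0) u hub := by
    rcases h u with rfl | hu | ⟨w, h₁, h₂⟩
    · exact .refl
    · exact .single hu
    · exact .head h₁ (.single h₂)
  have fromHub : Relation.ReflTransGen (fun a b => adj a b ≠ 0) hub v := by
    rcases h v with rfl | hv | ⟨w, h₁, h₂⟩
    · exact .refl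
    · exact .single (by rwa [hsymm])
    · exact .tail (.single (by rwa [hsymm])) (by rwa [hsymm])
  exact toHub.trans fromHub

end Multigraph

abbrev K23 : Multigraph where
  V := Fin 5
  adj := ![![0,0,1,1,1], ![0,0,1,1,1], ![1,1,0,0,0], ![1,1,0,0,0], ![1,1,0,0,0]]
  adj_symm := by decide
  adj_loopless := by decide
  conn := Multigraph.reflTransGen_of_hub _ (by decide) 0 (by decide)

abbrev K22 : Multigraph where
  V := Fin 4
  adj := ![![0,0,1,1], ![0,0,1,1], ![1,1,0,0], ![1,1,0,0]]
  adj_symm := by decide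
  adj_loopless := by decide
  conn := Multigraph.reflTransGen_of_hub _ (by decide) 0 (by decide)

abbrev K23K22 : Multigraph where
  V := Fin 8
  adj := ![![0,0,1,1,1,0,1,1], ![0,0,1,1,1,0,0,0], ![1,1,0,0,0,0,0,0], ![1,1,0,0,0,0,0,0],
    ![1,1,0,0,0,0,0,0], ![0,0,0,0,0,0,1,1], ![1,0,0,0,0,1,0,0], ![1,0,0,0,0,1,0,0]]
  adj_symm := by decide
  adj_loopless := by decide
  conn := Multigraph.reflTransGen_of_hub _ (by decide) 0 (by decide)

/-- Vertex `0` is the gluing vertex `P`; the blocks are `K_{2,3}` on `{0, 1} ∪ {2, 3, 4}` and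
the two `K_{2,2}` on `{0, 5} ∪ {6, 7}` and `{0, 8} ∪ {9, 10}`. -/
abbrev K23K22K22 : Multigraph where
  V := Fin 11
  adj := ![![0,0,1,1,1,0,1,1,0,1,1], ![0,0,1,1,1,0,0,0,0,0,0], ![1,1,0,0,0,0,0,0,0,0,0],
    ![1,1,0,0,0,0,0,0,0,0,0], ![1,1,0,0,0,0,0,0,0,0,0], ![0,0,0,0,0,0,1,1,0,0,0],
    ![1,0,0,0,0,1,0,0,0,0,0], ![1,0,0,0,0,1,0,0,0,0,0], ![0,0,0,0,0,0,0,0,0,1,1],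
    ![1,0,0,0,0,0,0,0,1,0,0], ![1,0,0,0,0,0,0,0,1,0,0]]
  adj_symm := by decide
  adj_loopless := by decide
  conn := Multigraph.reflTransGen_of_hub _ (by decide) 0 (by decide)

lemma isCompleteBipartite_K23 : K23.IsCompleteBipartite {0, 1} 2 3 :=
  ⟨by decide, by decide, by decide⟩

lemma isCompleteBipartite_K22 : K22.IsCompleteBipartite {0, 1} 2 2 :=
  ⟨by decide, by decide, by decide⟩

lemma isVertexGluing_K23_K22 : IsVertexGluing K23K22 K23 K22 0 0 0 :=
  ⟨Fin.castLE (by norm_num), ![0, 5, 6, 7], by decide, by decide, by decide, by decide,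
    by decide, by decide, by decide, by decide, by decide⟩

lemma isVertexGluing_K23K22_K22 : IsVertexGluing K23K22K22 K23K22 K22 0 0 0 :=
  ⟨Fin.castLE (by norm_num), ![0, 8, 9, 10], by decide, by decide, by decide, by decide,
    by decide, by decide, by decide, by decide, by decide⟩

lemma simple_K23K22K22 : K23K22K22.Simple := ⟨by decide, by decide⟩

namespace K23K22K22

open Multigraph

abbrev P : K23K22K22.V := 0

def block : Fin 11 → Fin 4 := ![0, 1, 1, 1, 1, 2, 2, 2, 3, 3, 3]

/-- Lowering the block `B` of `v` by one has Laplacian `deg_B(P) • P` minus the neighbours of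
`P` in `B`; lowering also the vertex opposite `P` turns it into `deg_B(P) • (P - v)`. Either way
`3P - v - Δ (lowering v)` is effective. -/
def lowering (v : Fin 11) : Fin 11 → ℤ := fun w =>
  (if v ≠ 0 ∧ block w = block v then -1 else 0) +
    (if w = v ∧ (v = 1 ∨ v = 5 ∨ v = 8) then -1 else 0)

lemma effective_three_sub_lowering :
    ∀ v w, 0 ≤ (K23K22K22.pt P 3 - K23K22K22.pt v 1 - K23K22K22.lap (lowering v)) w := by
  decide

/-- Unless `u` and `v` both lie in the `K_{2,3}` block, the single witnesses add up, since
`2P - w` is already equivalent to an effective divisor for `w` in a `K_{2,2}` block. -/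
def pairLowering (u v : Fin 11) : Fin 11 → ℤ :=
  if block u = 1 ∧ block v = 1 then
    fun w => lowering 1 w - (if w = u ∧ u ≠ 1 then 1 else 0) - (if w = v ∧ v ≠ 1 then 1 else 0)
  else lowering u + lowering v

lemma effective_five_sub_pairLowering : ∀ u v w,
    0 ≤ (K23K22K22.pt P 5 - K23K22K22.pt v 1 - K23K22K22.pt u 1
      - K23K22K22.lap (pairLowering u v)) w := by
  decide

def potential : Fin 11 → Fin 11 → ℤ := ![
    ![0, 0, 0, 0, 0, 0, 0, 0, 0, 0, 0],
    ![0, 2, 1, 1, 1, 0, 0, 0, 0, 0, 0],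
    ![0, 2, 4, 1, 1, 0, 0, 0, 0, 0, 0],
    ![0, 2, 1, 4, 1, 0, 0, 0, 0, 0, 0],
    ![0, 2, 1, 1, 4, 0, 0, 0, 0, 0, 0],
    ![0, 0, 0, 0, 0, 2, 1, 1, 0, 0, 0],
    ![0, 0, 0, 0, 0, 2, 3, 1, 0, 0, 0],
    ![0, 0, 0, 0, 0, 2, 1, 3, 0, 0, 0],
    ![0, 0, 0, 0, 0, 0, 0, 0, 2, 1, 1],
    ![0, 0, 0, 0, 0, 0, 0, 0, 2, 3, 1],
    ![0, 0, 0, 0, 0, 0, 0, 0, 2, 1, 3]]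

def potentialScale : Fin 11 → ℤ := ![1, 3, 6, 6, 6, 2, 4, 4, 2, 4, 4]

lemma isPotential_potential :
    ∀ Q, K23K22K22.IsPotential P Q (potentialScale Q) (potential Q) := by
  unfold IsPotential
  decide

lemma linNonempty_of_four_le_deg {D : Fin 11 → ℤ} (hD : 4 ≤ K23K22K22.deg D) :
    K23K22K22.LinNonempty D := by
  refine linNonempty_of_genus_le_deg (P := P) (fun Q => ⟨_, _, isPotential_potential Q⟩) ?_
  have h : ∑ u, ∑ v, (K23K22K22.adj u v : ℤ) = 28 := by decide
  simp only [h, Fintype.card_fin]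
  omega

lemma rankGe_pt_three : K23K22K22.RankGe (K23K22K22.pt P 3) 1 :=
  rankGe_succ fun v => rankGe_zero ⟨lowering v, effective_three_sub_lowering v⟩

lemma rankGe_pt_five : K23K22K22.RankGe (K23K22K22.pt P 5) 2 :=
  rankGe_succ fun v => rankGe_succ fun u =>
    rankGe_zero ⟨pairLowering u v, effective_five_sub_pairLowering u v⟩

def distFromP : Fin 11 → ℕ := ![0, 2, 1, 1, 1, 2, 1, 1, 2, 1, 1]

/-- Here and in the next two lemmas, subtracting `Δf` turns `2jP` minus the first `j` of the
vertices `1, 5, 8` into the same truncation of `2 • 1 + 5 + 8 - P`, which is `P`-reduced (burn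
the vertices in order of distance from `P`). -/
lemma not_linNonempty_two :
    ¬ K23K22K22.LinNonempty (K23K22K22.pt P 2 - K23K22K22.pt 1 1) :=
  not_linNonempty_of_reduced (P := P) (f := lowering 1)
    (.of_order distFromP (by decide) (by decide)) (by decide)

lemma not_linNonempty_four :
    ¬ K23K22K22.LinNonempty (K23K22K22.pt P 4 - (K23K22K22.pt 1 1 + K23K22K22.pt 5 1)) :=
  not_linNonempty_of_reduced (P := P) (f := lowering 1 + lowering 5)
    (.of_order distFromP (by decide) (by decide)) (by decide)

lemma not_linNonempty_six : ¬ K23K22K22.LinNonempty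
    (K23K22K22.pt P 6 - (K23K22K22.pt 1 1 + K23K22K22.pt 5 1 + K23K22K22.pt 8 1)) :=
  not_linNonempty_of_reduced (P := P) (f := lowering 1 + lowering 5 + lowering 8)
    (.of_order distFromP (by decide) (by decide)) (by decide)

/-- `r(nP)`; for `n = 0` the truncated subtraction gives the right value `0`. -/
def rankAtP (n : ℕ) : ℕ := if n ≤ 7 then (n - 1) / 2 else n - 4

lemma rankAtP_lt_succ_iff (t : ℕ) :
    rankAtP t < rankAtP (t + 1) ↔ t = 2 ∨ t = 4 ∨ t = 6 ∨ 7 ≤ t := by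
  rcases le_or_gt t 6 with h | h
  · interval_cases t <;> decide
  · unfold rankAtP
    split_ifs <;> omega

lemma rankGe_rankAtP (n : ℕ) : K23K22K22.RankGe (K23K22K22.pt P n) (rankAtP n) := by
  rcases (by omega : n ≤ 2 ∨ 3 ≤ n ∧ n ≤ 4 ∨ 5 ≤ n ∧ n ≤ 6 ∨ 7 ≤ n) with h | h | h | h
  · rw [(by unfold rankAtP; split_ifs <;> omega : rankAtP n = 0)]
    exact rankGe_zero (effective_pt P (Nat.cast_nonneg n)).linNonempty
  · rw [(by unfold rankAtP; split_ifs <;> omega : rankAtP n = 1)]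
    exact rankGe_pt_three.mono (pt_mono P (by exact_mod_cast h.1))
  · rw [(by unfold rankAtP; split_ifs <;> omega : rankAtP n = 2)]
    exact rankGe_pt_five.mono (pt_mono P (by exact_mod_cast h.1))
  · intro E _ hE
    apply linNonempty_of_four_le_deg
    rw [deg_sub, deg_pt, hE, (by unfold rankAtP; split_ifs <;> omega : rankAtP n = n - 4)]
    omega

lemma not_rankGe_rankAtP_succ (n : ℕ) :
    ¬ K23K22K22.RankGe (K23K22K22.pt P n) (rankAtP n + 1) := by
  rcases (by omega : n ≤ 1 ∨ 2 ≤ n ∧ n ≤ 3 ∨ 4 ≤ n ∧ n ≤ 5 ∨ 6 ≤ n) with h | h | h | h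
  · have two : ¬ K23K22K22.RankGe (K23K22K22.pt P 2) 1 :=
      not_rankGe_pt (d := 1) (effective_pt _ zero_le_one) (deg_pt 1 1) not_linNonempty_two
        le_rfl rfl
    rw [(by unfold rankAtP; split_ifs <;> omega : rankAtP n = 0)]
    exact fun hr => two (hr.mono (pt_mono P (by exact_mod_cast h.trans one_le_two)))
  · exact not_rankGe_pt (d := 1) (effective_pt _ zero_le_one) (deg_pt 1 1) not_linNonempty_two
      h.1 (by unfold rankAtP; split_ifs <;> omega)
  · exact not_rankGe_pt (d := 2) (by unfold Effective; decide) (by decide) not_linNonempty_four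
      h.1 (by unfold rankAtP; split_ifs <;> omega)
  · exact not_rankGe_pt (d := 3) (by unfold Effective; decide) (by decide) not_linNonempty_six
      h (by unfold rankAtP; split_ifs <;> omega)

lemma rank_pt (n : ℕ) : K23K22K22.rank (K23K22K22.pt P n) = rankAtP n :=
  rank_eq_of_rankGe (rankGe_rankAtP n) (not_rankGe_rankAtP_succ n)

lemma Hr_eq : K23K22K22.Hr P = {t : ℕ | t = 0 ∨ t = 3 ∨ t = 5 ∨ t = 7 ∨ 8 ≤ t} := by
  ext t
  simp only [Hr, Set.mem_ofPred_eq]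
  rcases t with _ | t
  · rw [rank_eq_neg_one_of_deg_neg (by simp [deg_pt]), rank_pt]
    simp [rankAtP]
  · have h := rank_pt (t + 1)
    push_cast at h ⊢
    rw [h, add_sub_cancel_right, rank_pt, Nat.cast_lt]
    clear h
    rw [rankAtP_lt_succ_iff, false_or]

end K23K22K22

/-- There is a simple graph whose rank Weierstrass set at some vertex is
`{0, 3, 5, 7} ∪ {n ≥ 8}`, which is not closed under addition; concretely, the
vertex gluing of `K_{2,3}` and two copies of `K_{2,2}` at a common vertex works. -/
theorem exists_Hr_not_semigroup :
    ∃ (G : Multigraph) (P : G.V), G.Simple ∧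
      G.Hr P = {t : ℕ | t = 0 ∨ t = 3 ∨ t = 5 ∨ t = 7 ∨ 8 ≤ t} ∧
      (3 ∈ G.Hr P ∧ 6 ∉ G.Hr P ∧
        ¬ ∀ a ∈ G.Hr P, ∀ b ∈ G.Hr P, a + b ∈ G.Hr P) ∧
      ∃ (H K23 K22a K22b : Multigraph) (Q : H.V) (R3 : K23.V) (R2a : K22a.V)
        (R2b : K22b.V) (A3 : Finset K23.V) (A2a : Finset K22a.V)
        (A2b : Finset K22b.V),
        K23.IsCompleteBipartite A3 2 3 ∧ R3 ∈ A3 ∧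
        K22a.IsCompleteBipartite A2a 2 2 ∧ R2a ∈ A2a ∧
        K22b.IsCompleteBipartite A2b 2 2 ∧ R2b ∈ A2b ∧
        IsVertexGluing H K23 K22a Q R3 R2a ∧
        IsVertexGluing G H K22b P Q R2b := by
  have h3 : 3 ∈ K23K22K22.Hr K23K22K22.P := by simp [K23K22K22.Hr_eq]
  have h6 : 6 ∉ K23K22K22.Hr K23K22K22.P := by simp [K23K22K22.Hr_eq]
  exact ⟨K23K22K22, K23K22K22.P, simple_K23K22K22, K23K22K22.Hr_eq,
    ⟨h3, h6, fun h => h6 (h 3 h3 3 h3)⟩,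
    K23K22, K23, K22, K22, 0, 0, 0, 0, {0, 1}, {0, 1}, {0, 1},
    isCompleteBipartite_K23, by decide, isCompleteBipartite_K22, by decide,
    isCompleteBipartite_K22, by decide, isVertexGluing_K23_K22, isVertexGluing_K23K22_K22⟩
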